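/- Let 𝒞 be a stable cofibration category and consider a pushout square in 𝒞 with f: X → Y a cofibration, g: X → Z arbitrary, and P = Y ∪_X Z. Then the image of this square in the triangulated homotopy category Ho(𝒞) is homotopy cartesian; more precisely there is an exact triangle Y ⊕ Z → P → ΣX → Σ(Y ⊕ Z) whose last morphism is Σ of the map (−f, g). -/

import Mathlib

open CategoryTheory Category Limits Pretriangulated

universe v v' u u'

section Defs

variable {H : Type u'} [Category.{v'} H] [Preadditive H] [HasZeroObject H] [HasShift H ℤ]
  [∀ n : ℤ, (shiftFunctor H n).Additive] [Pretriangulated H] [HasBinaryBiproducts H]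

/-- The square with sides `f : T ⟶ U`, `g : T ⟶ V`, `g' : U ⟶ X`, `f' : V ⟶ X`
is homotopy cartesian. -/
def HomotopyCartesian {T U V X : H} (f : T ⟶ U) (g : T ⟶ V) (g' : U ⟶ X) (f' : V ⟶ X) : Prop :=
  ∃ δ : X ⟶ T⟦(1 : ℤ)⟧,
    Triangle.mk (biprod.lift f (-g)) (biprod.desc g' f') δ ∈ distTriang H

end Defs

variable (C : Type u) [Category.{v} C]

/-- A cofibration category: a category with classes of cofibrations and weak equivalences
subject to the usual axioms. -/
structure CofibrationCategory where
  cof : MorphismProperty C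
  weq : MorphismProperty C
  weq_of_isIso : ∀ {X Y : C} (f : X ⟶ Y), IsIso f → weq f
  weq_comp : ∀ {X Y Z : C} (f : X ⟶ Y) (g : Y ⟶ Z), weq f → weq g → weq (f ≫ g)
  weq_of_comp_left : ∀ {X Y Z : C} (f : X ⟶ Y) (g : Y ⟶ Z), weq g → weq (f ≫ g) → weq f
  weq_of_comp_right : ∀ {X Y Z : C} (f : X ⟶ Y) (g : Y ⟶ Z), weq f → weq (f ≫ g) → weq g
  cof_of_isIso : ∀ {X Y : C} (f : X ⟶ Y), IsIso f → cof f
  cof_comp : ∀ {X Y Z : C} (f : X ⟶ Y) (g : Y ⟶ Z), cof f → cof g → cof (f ≫ g)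
  pushout_exists : ∀ {X Y Z : C} (f : X ⟶ Y) (g : X ⟶ Z), cof f →
    ∃ (P : C) (g' : Y ⟶ P) (f' : Z ⟶ P), IsPushout f g g' f'
  cof_pushout : ∀ {X Y Z P : C} (f : X ⟶ Y) (g : X ⟶ Z) (g' : Y ⟶ P) (f' : Z ⟶ P),
    IsPushout f g g' f' → cof f → cof f'
  acyclic_cof_pushout : ∀ {X Y Z P : C} (f : X ⟶ Y) (g : X ⟶ Z) (g' : Y ⟶ P) (f' : Z ⟶ P),
    IsPushout f g g' f' → cof f → weq f → weq f'
  initial_exists : ∃ I : C, Nonempty (IsInitial I)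
  initial_cof : ∀ {I X : C}, IsInitial I → ∀ f : I ⟶ X, cof f
  factorization : ∀ {X Y : C} (f : X ⟶ Y),
    ∃ (Z : C) (c : X ⟶ Z) (w : Z ⟶ Y), cof c ∧ weq w ∧ c ≫ w = f

variable {C}

/-- A cofibration category is pointed if every initial object is terminal. -/
def CofibrationCategory.Pointed (𝒞 : CofibrationCategory C) : Prop :=
  ∀ I : C, IsInitial I → Nonempty (IsTerminal I)

/-- The data of a quotient `Q = Y/X` of a morphism `f : X ⟶ Y` in a pointed cofibration
category: a pushout of `f` along the map to a point. -/
structure QuotientData (𝒞 : CofibrationCategory C) {X Y : C} (f : X ⟶ Y) where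
  T : C
  hT : IsTerminal T
  hT' : IsInitial T
  toT : X ⟶ T
  Q : C
  q : Y ⟶ Q
  fromT : T ⟶ Q
  isPushout : IsPushout f toT q fromT

/-- A triangulated homotopy category of a stable cofibration category `𝒞`: a localization
`γ : C ⥤ H` of `C` at the weak equivalences together with connecting morphisms making all
elementary triangles (coming from cofibrations and their quotients) distinguished, with the
connecting morphisms natural in morphisms of cofibrations. -/
structure TriangulatedHomotopyCategory (𝒞 : CofibrationCategory C)
    (H : Type u') [Category.{v'} H] [Preadditive H] [HasZeroObject H] [HasShift H ℤ]
    [∀ n : ℤ, (shiftFunctor H n).Additive] [Pretriangulated H] (γ : C ⥤ H) where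
  isLocalization : γ.IsLocalization 𝒞.weq
  δ : ∀ {X Y : C} {f : X ⟶ Y}, 𝒞.cof f → ∀ D : QuotientData 𝒞 f,
    γ.obj D.Q ⟶ (γ.obj X)⟦(1 : ℤ)⟧
  elementary_triangle : ∀ {X Y : C} {f : X ⟶ Y} (hf : 𝒞.cof f) (D : QuotientData 𝒞 f),
    Triangle.mk (γ.map f) (γ.map D.q) (δ hf D) ∈ distTriang H
  δ_natural : ∀ {X Y X' Y' : C} {f : X ⟶ Y} {f' : X' ⟶ Y'}
    (hf : 𝒞.cof f) (hf' : 𝒞.cof f') (x : X ⟶ X') (y : Y ⟶ Y'), f ≫ y = x ≫ f' →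
    ∀ (D : QuotientData 𝒞 f) (D' : QuotientData 𝒞 f') (u : D.Q ⟶ D'.Q),
      D.q ≫ u = y ≫ D'.q →
      δ hf D ≫ ((γ.map x)⟦(1 : ℤ)⟧') = γ.map u ≫ δ hf' D'

/-!
Replace the square by the double mapping cylinder `D = IX ∪_{X ⊔ X} (Y ⊔ Z)`, where
`X ⊔ X ⟶ IX ⟶ X` is a cylinder, and compare it with `P` through `r : D ⟶ P`.

The cofibration `j : Y ⊔ Z ⟶ D` is a pushout of the cylinder inclusion, so it has the same
quotient `IX/(X ⊔ X)` and, by naturality, its connecting map is that of the cylinder followed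
by `Σ(f ⊔ g)`. The cylinder triangle is isomorphic to the rotation of the split triangle
`X ⟶ X ⊕ X ⟶ X`, which identifies `IX/(X ⊔ X)` with `ΣX` and the connecting map with
`Σ(-1, 1)`.

`D` is also the pushout along `g` of `X ⟶ Y ∪_X IX`, and `Y ∪_X IX ⟶ Y` is inverted in
`Ho(𝒞)`; comparing quotient triangles twice then shows that `r` is inverted too. Transporting
the elementary triangle of `j` along these isomorphisms gives the exact triangle, and rotating
it shows that the square is homotopy cartesian.
-/

namespace CategoryTheory.Pretriangulated

variable {H : Type u'} [Category.{v'} H] [Preadditive H] [HasZeroObject H] [HasShift H ℤ]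
  [∀ n : ℤ, (shiftFunctor H n).Additive] [Pretriangulated H]

lemma exists_distTriang_of_iso {A A' B B' C C' : H} {a : A ⟶ B} {b : B ⟶ C}
    {c : C ⟶ A⟦(1 : ℤ)⟧} (hT : Triangle.mk a b c ∈ distTriang H)
    (eA : A' ≅ A) (eB : B ≅ B') (eC : C ≅ C') {a' : A' ⟶ B'} (ha : eA.hom ≫ a ≫ eB.hom = a')
    {c' : C' ⟶ A'⟦(1 : ℤ)⟧} (hc : c = eC.hom ≫ c' ≫ eA.hom⟦(1 : ℤ)⟧') :
    ∃ b' : B' ⟶ C', Triangle.mk a' b' c' ∈ distTriang H :=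
  ⟨eB.inv ≫ b ≫ eC.hom, isomorphic_distinguished _ hT _
    (Triangle.isoMk _ _ eA eB.symm eC.symm (by dsimp [Triangle.mk]; simp [← ha])
      (by dsimp [Triangle.mk]; simp) (by dsimp [Triangle.mk]; simp [hc]))⟩

variable [HasBinaryBiproducts H]

lemma isIso_biprod_desc_of_distTriang {A B S : H} {i : B ⟶ S} {p : S ⟶ A} {δ : A ⟶ B⟦(1 : ℤ)⟧}
    (hT : Triangle.mk i p δ ∈ distTriang H) {s : A ⟶ S} {r : S ⟶ B}
    (hr : i ≫ r = 𝟙 B) (hs : s ≫ p = 𝟙 A) (hsr : s ≫ r = 0) :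
    IsIso (biprod.desc s i) := by
  have hip : i ≫ p = 0 := comp_distTriang_mor_zero₁₂ _ hT
  obtain ⟨y, hy⟩ : ∃ y : A ⟶ S, 𝟙 S - p ≫ s - r ≫ i = p ≫ y :=
    Triangle.yoneda_exact₂ _ hT (𝟙 S - p ≫ s - r ≫ i)
      (show i ≫ (𝟙 S - p ≫ s - r ≫ i) = 0 by simp [reassoc_of% hip, reassoc_of% hr])
  have hy0 : y = 0 := by simpa [reassoc_of% hs, reassoc_of% hsr] using congr(s ≫ $hy).symm
  rw [hy0, comp_zero, sub_sub, sub_eq_zero] at hy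
  exact ⟨biprod.lift p r, by ext <;> simp [hr, hs, hsr, hip], by rw [biprod.lift_desc, ← hy]⟩

lemma codiagonal_distinguished (X : H) :
    Triangle.mk (biprod.desc (𝟙 X) (𝟙 X)) 0 ((biprod.lift (-𝟙 X) (𝟙 X))⟦(1 : ℤ)⟧') ∈
      distTriang H := by
  let e : X ⊞ X ≅ X ⊞ X :=
    ⟨biprod.desc (biprod.lift (𝟙 X) (𝟙 X)) biprod.inr,
      biprod.desc (biprod.lift (𝟙 X) (-𝟙 X)) biprod.inr, by ext <;> simp, by ext <;> simp⟩
  have h₁ : biprod.lift (𝟙 X) (-𝟙 X) ≫ e.hom = 𝟙 X ≫ biprod.inl := by ext <;> simp [e]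
  have h₂ : biprod.desc (𝟙 X) (𝟙 X) ≫ 𝟙 X = e.hom ≫ biprod.snd := by ext <;> simp [e]
  have h₃ : (0 : X ⟶ X⟦(1 : ℤ)⟧) ≫ (𝟙 X)⟦(1 : ℤ)⟧' = 𝟙 X ≫ 0 := by simp
  have hsplit : Triangle.mk (biprod.lift (𝟙 X) (-𝟙 X)) (biprod.desc (𝟙 X) (𝟙 X)) 0 ∈
      distTriang H :=
    isomorphic_distinguished _ (binaryBiproductTriangle_distinguished X X) _
      (Triangle.isoMk _ _ (Iso.refl X) e (Iso.refl X) h₁ h₂ h₃)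
  have h₃' : (biprod.lift (-𝟙 X) (𝟙 X))⟦(1 : ℤ)⟧' ≫ (𝟙 (X ⊞ X))⟦(1 : ℤ)⟧' =
      𝟙 (X⟦(1 : ℤ)⟧) ≫ (-(biprod.lift (𝟙 X) (-𝟙 X))⟦(1 : ℤ)⟧') := by
    rw [Functor.map_id, comp_id, id_comp, ← Functor.map_neg]
    congr 1
    ext <;> simp
  exact isomorphic_distinguished _ (rot_of_distTriang _ hsplit) _
    (Triangle.isoMk _ _ (Iso.refl _) (Iso.refl _) (Iso.refl _)
      ((comp_id _).trans (id_comp _).symm) ((comp_id _).trans (id_comp _).symm) h₃')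

lemma exists_iso_of_distTriang_codiagonal {X S W E : H} (ψ : X ⊞ X ≅ S) (w : W ≅ X)
    {a : S ⟶ W} {b : W ⟶ E} {δ : E ⟶ S⟦(1 : ℤ)⟧} (hT : Triangle.mk a b δ ∈ distTriang H)
    (ha : ψ.hom ≫ a ≫ w.hom = biprod.desc (𝟙 X) (𝟙 X)) :
    ∃ Θ : E ≅ X⟦(1 : ℤ)⟧, δ = Θ.hom ≫ (biprod.lift (-𝟙 X) (𝟙 X) ≫ ψ.hom)⟦(1 : ℤ)⟧' := by
  obtain ⟨e, he₁, -⟩ := exists_iso_of_arrow_iso _ _ hT (codiagonal_distinguished X)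
    (Arrow.isoMk ψ.symm w (by dsimp [Triangle.mk]; simp [← ha]))
  let Θ : E ≅ X⟦(1 : ℤ)⟧ := Triangle.π₃.mapIso e
  have h₃ : δ ≫ ψ.inv⟦(1 : ℤ)⟧' = Θ.hom ≫ (biprod.lift (-𝟙 X) (𝟙 X))⟦(1 : ℤ)⟧' := by
    rw [show ψ.inv = e.hom.hom₁ from he₁.symm]
    exact e.hom.comm₃
  refine ⟨Θ, ?_⟩
  rw [Functor.map_comp, ← assoc, ← h₃, assoc, ← Functor.map_comp, Iso.inv_hom_id, Functor.map_id,
    comp_id]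

end CategoryTheory.Pretriangulated

lemma HomotopyCartesian.of_distTriang {H : Type u'} [Category.{v'} H] [Preadditive H]
    [HasZeroObject H] [HasShift H ℤ] [∀ n : ℤ, (shiftFunctor H n).Additive] [Pretriangulated H]
    [HasBinaryBiproducts H] {T U V X : H} {f : T ⟶ U} {g : T ⟶ V} {g' : U ⟶ X} {f' : V ⟶ X}
    {δ : X ⟶ T⟦(1 : ℤ)⟧}
    (h : Triangle.mk (biprod.desc g' f') δ ((biprod.lift (-f) g)⟦(1 : ℤ)⟧') ∈ distTriang H) :
    HomotopyCartesian f g g' f' := by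
  refine ⟨δ, (rotate_distinguished_triangle _).2 ?_⟩
  change Triangle.mk (biprod.desc g' f') δ (-(biprod.lift f (-g))⟦(1 : ℤ)⟧') ∈ distTriang H
  convert h using 2
  rw [← Functor.map_neg]
  congr 1
  ext <;> simp

lemma CategoryTheory.IsPushout.of_existsUnique {X Y Z P : C} {f : X ⟶ Y} {g : X ⟶ Z} {g' : Y ⟶ P}
    {f' : Z ⟶ P} (w : f ≫ g' = g ≫ f')
    (h : ∀ {T : C} (u : Y ⟶ T) (v : Z ⟶ T), f ≫ u = g ≫ v →
      ∃! φ : P ⟶ T, g' ≫ φ = u ∧ f' ≫ φ = v) :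
    IsPushout f g g' f' := by
  choose φ hφ hφ_unique using @h
  exact IsPushout.of_isColimit' ⟨w⟩ (PushoutCocone.IsColimit.mk _
    (fun s => φ s.inl s.inr s.condition) (fun s => (hφ _ _ _).1) (fun s => (hφ _ _ _).2)
    (fun s μ h₁ h₂ => hφ_unique _ _ _ μ ⟨h₁, h₂⟩))

/-- If `D = W ∪_{X₁ ⊔ X₂} (Y ⊔ Z)` and `A = Y ∪_{X₁} W`, then `D = A ∪_{X₂} Z`. -/
lemma isPushout_comp_of_isPushout_coprod {I X₁ X₂ Y Z S S' W A D : C} (hI : IsInitial I)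
    {i₁ : X₁ ⟶ S} {i₂ : X₂ ⟶ S} (sqX : IsPushout (hI.to X₁) (hI.to X₂) i₁ i₂)
    {iY : Y ⟶ S'} {iZ : Z ⟶ S'} (sqYZ : IsPushout (hI.to Y) (hI.to Z) iY iZ)
    {f : X₁ ⟶ Y} {g : X₂ ⟶ Z} {fg : S ⟶ S'} (h₁ : i₁ ≫ fg = f ≫ iY) (h₂ : i₂ ≫ fg = g ≫ iZ)
    {m : S ⟶ W} {n : W ⟶ D} {j : S' ⟶ D} (sqD : IsPushout m fg n j)
    {g₁ : Y ⟶ A} {f₁ : W ⟶ A} (sqA : IsPushout f (i₁ ≫ m) g₁ f₁)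
    {a : A ⟶ D} (ha₁ : g₁ ≫ a = iY ≫ j) (ha₂ : f₁ ≫ a = n) :
    IsPushout ((i₂ ≫ m) ≫ f₁) g a (iZ ≫ j) := by
  refine .of_existsUnique (by rw [assoc, assoc, ha₂, sqD.w, reassoc_of% h₂])
    fun u v huv => ⟨sqD.desc (f₁ ≫ u) (sqYZ.desc (g₁ ≫ u) v (hI.hom_ext _ _)) ?_, ⟨?_, ?_⟩, ?_⟩
  · refine sqX.hom_ext ?_ ?_
    · rw [reassoc_of% h₁, sqYZ.inl_desc, ← reassoc_of% sqA.w]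
    · rw [reassoc_of% h₂, sqYZ.inr_desc, ← huv, assoc, assoc]
  · refine sqA.hom_ext ?_ ?_
    · rw [reassoc_of% ha₁, sqD.inr_desc, sqYZ.inl_desc]
    · rw [reassoc_of% ha₂, sqD.inl_desc]
  · rw [assoc, sqD.inr_desc, sqYZ.inr_desc]
  · rintro μ ⟨hμ₁, hμ₂⟩
    refine sqD.hom_ext ?_ ?_
    · rw [sqD.inl_desc, ← ha₂, assoc, hμ₁]
    · refine sqYZ.hom_ext ?_ ?_
      · rw [sqD.inr_desc, sqYZ.inl_desc, ← reassoc_of% ha₁, hμ₁]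
      · rw [sqD.inr_desc, sqYZ.inr_desc, ← hμ₂, assoc]

namespace QuotientData

variable {𝒞 : CofibrationCategory C}

/-- Reducible, so that `(D.pushout h).Q` unfolds to `D.Q` during unification. -/
noncomputable abbrev pushout {X Y Z P : C} {f : X ⟶ Y} {g : X ⟶ Z} {g' : Y ⟶ P} {f' : Z ⟶ P}
    (D : QuotientData 𝒞 f) (h : IsPushout f g g' f') : QuotientData 𝒞 f' where
  T := D.T
  hT := D.hT
  hT' := D.hT'
  toT := D.hT.from Z
  Q := D.Q
  q := h.desc D.q (D.hT.from Z ≫ D.fromT)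
    (by rw [D.isPushout.w, ← assoc, D.hT.hom_ext (g ≫ _) D.toT])
  fromT := D.fromT
  isPushout := IsPushout.of_top' (D.hT.hom_ext D.toT (g ≫ D.hT.from Z) ▸ D.isPushout) h

@[simp]
lemma comp_pushout_q {X Y Z P : C} {f : X ⟶ Y} {g : X ⟶ Z} {g' : Y ⟶ P} {f' : Z ⟶ P}
    (D : QuotientData 𝒞 f) (h : IsPushout f g g' f') : g' ≫ (D.pushout h).q = D.q :=
  h.inl_desc _ _ _

abbrev ofPoint {I : C} (hI : IsInitial I) (hT : IsTerminal I) (A : C) :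
    QuotientData 𝒞 (hI.to A) :=
  ⟨I, hT, hI, 𝟙 I, A, 𝟙 A, hI.to A, IsPushout.id_vert _⟩

lemma nonempty_of_cof (hpt : 𝒞.Pointed) {X Y : C} {f : X ⟶ Y} (hf : 𝒞.cof f) :
    Nonempty (QuotientData 𝒞 f) := by
  obtain ⟨I, ⟨hI⟩⟩ := 𝒞.initial_exists
  obtain ⟨hT⟩ := hpt I hI
  obtain ⟨Q, q, fromT, h⟩ := 𝒞.pushout_exists f (hT.from X) hf
  exact ⟨⟨I, hT, hI, hT.from X, Q, q, fromT, h⟩⟩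

noncomputable def map {X Y X' Y' : C} {f : X ⟶ Y} {f' : X' ⟶ Y'} (D : QuotientData 𝒞 f)
    (D' : QuotientData 𝒞 f') {x : X ⟶ X'} {y : Y ⟶ Y'} (w : f ≫ y = x ≫ f') : D.Q ⟶ D'.Q :=
  D.isPushout.desc (y ≫ D'.q) (D.hT'.to D'.T ≫ D'.fromT)
    (by rw [reassoc_of% w, D'.isPushout.w, ← assoc, ← assoc, D'.hT.hom_ext (x ≫ _)])

@[simp]
lemma q_map {X Y X' Y' : C} {f : X ⟶ Y} {f' : X' ⟶ Y'} (D : QuotientData 𝒞 f)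
    (D' : QuotientData 𝒞 f') {x : X ⟶ X'} {y : Y ⟶ Y'} (w : f ≫ y = x ≫ f') :
    D.q ≫ D.map D' w = y ≫ D'.q :=
  D.isPushout.inl_desc _ _ _

@[simp]
lemma fromT_map {X Y X' Y' : C} {f : X ⟶ Y} {f' : X' ⟶ Y'} (D : QuotientData 𝒞 f)
    (D' : QuotientData 𝒞 f') {x : X ⟶ X'} {y : Y ⟶ Y'} (w : f ≫ y = x ≫ f') :
    D.fromT ≫ D.map D' w = D.hT'.to D'.T ≫ D'.fromT :=
  D.isPushout.inr_desc _ _ _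

end QuotientData

namespace TriangulatedHomotopyCategory

variable {𝒞 : CofibrationCategory C} {H : Type u'} [Category.{v'} H] [Preadditive H]
  [HasZeroObject H] [HasShift H ℤ] [∀ n : ℤ, (shiftFunctor H n).Additive] [Pretriangulated H]
  {γ : C ⥤ H}

lemma δ_pushout (T : TriangulatedHomotopyCategory 𝒞 H γ) {X Y Z P : C} {f : X ⟶ Y} {g : X ⟶ Z}
    {g' : Y ⟶ P} {f' : Z ⟶ P} (hf : 𝒞.cof f) (h : IsPushout f g g' f') (D : QuotientData 𝒞 f) :
    T.δ (𝒞.cof_pushout f g g' f' h hf) (D.pushout h) = T.δ hf D ≫ (γ.map g)⟦(1 : ℤ)⟧' := by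
  rw [T.δ_natural hf (𝒞.cof_pushout f g g' f' h hf) g g' h.w D (D.pushout h) (𝟙 D.Q)
    (by rw [comp_id, QuotientData.comp_pushout_q]), γ.map_id, id_comp]

def triangleHom (T : TriangulatedHomotopyCategory 𝒞 H γ) {X Y X' Y' : C} {f : X ⟶ Y}
    {f' : X' ⟶ Y'} (hf : 𝒞.cof f) (hf' : 𝒞.cof f') (D : QuotientData 𝒞 f)
    (D' : QuotientData 𝒞 f') {x : X ⟶ X'} {y : Y ⟶ Y'}
    (w : f ≫ y = x ≫ f') (u : D.Q ⟶ D'.Q) (hu : D.q ≫ u = y ≫ D'.q) :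
    Triangle.mk (γ.map f) (γ.map D.q) (T.δ hf D) ⟶
      Triangle.mk (γ.map f') (γ.map D'.q) (T.δ hf' D') :=
  Triangle.homMk _ _ (γ.map x) (γ.map y) (γ.map u)
    (show γ.map f ≫ γ.map y = γ.map x ≫ γ.map f' by rw [← γ.map_comp, w, γ.map_comp])
    (show γ.map D.q ≫ γ.map u = γ.map y ≫ γ.map D'.q by rw [← γ.map_comp, hu, γ.map_comp])
    (T.δ_natural hf hf' x y w D D' u hu)

lemma isZero_obj (T : TriangulatedHomotopyCategory 𝒞 H γ) {I : C} (hI : IsInitial I)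
    (hT : IsTerminal I) : IsZero (γ.obj I) := by
  have h := comp_distTriang_mor_zero₁₂ _
    (T.elementary_triangle (𝒞.initial_cof hI _) (QuotientData.ofPoint hI hT I))
  change γ.map (hI.to I) ≫ γ.map (𝟙 I) = 0 at h
  rwa [hI.hom_ext (hI.to I) (𝟙 I), γ.map_id, id_comp, ← IsZero.iff_id_eq_zero] at h

lemma isIso_map_of_isPushout (T : TriangulatedHomotopyCategory 𝒞 H γ) (hpt : 𝒞.Pointed)
    {X A Y Z D P : C} {k : X ⟶ A} {f : X ⟶ Y} {g : X ⟶ Z} {a : A ⟶ D} {z : Z ⟶ D} {g' : Y ⟶ P}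
    {f' : Z ⟶ P} (hk : 𝒞.cof k) (hf : 𝒞.cof f) (h₁ : IsPushout k g a z)
    (h₂ : IsPushout f g g' f') {s : A ⟶ Y} (hs : k ≫ s = f) [IsIso (γ.map s)] {r : D ⟶ P}
    (ha : a ≫ r = s ≫ g') (hz : z ≫ r = f') :
    IsIso (γ.map r) := by
  -- Compare the quotient triangles of `k` and `f`, then those of their pushouts `z` and `f'`,
  -- which have the same quotients.
  obtain ⟨Dk⟩ := QuotientData.nonempty_of_cof hpt hk
  obtain ⟨Df⟩ := QuotientData.nonempty_of_cof hpt hf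
  have hks : k ≫ s = 𝟙 X ≫ f := by rw [hs, id_comp]
  let u := Dk.map Df hks
  have : IsIso (γ.map u) :=
    isIso₃_of_isIso₁₂ (T.triangleHom hk hf Dk Df hks u (Dk.q_map Df hks))
      (T.elementary_triangle hk Dk) (T.elementary_triangle hf Df)
      (inferInstanceAs (IsIso (γ.map (𝟙 _)))) (inferInstanceAs (IsIso (γ.map _)))
  have hzr : z ≫ r = 𝟙 Z ≫ f' := by rw [hz, id_comp]
  have hu : (Dk.pushout h₁).q ≫ u = r ≫ (Df.pushout h₂).q := by
    refine h₁.hom_ext ?_ ?_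
    · rw [reassoc_of% (Dk.comp_pushout_q h₁), QuotientData.q_map, reassoc_of% ha,
        QuotientData.comp_pushout_q]
    · rw [(Dk.pushout h₁).isPushout.w_assoc, reassoc_of% hz, (Df.pushout h₂).isPushout.w]
      dsimp
      rw [QuotientData.fromT_map, ← assoc, Df.hT.hom_ext (_ ≫ _)]
  exact isIso₂_of_isIso₁₃
    (T.triangleHom (𝒞.cof_pushout _ _ _ _ h₁ hk) (𝒞.cof_pushout _ _ _ _ h₂ hf)
      (Dk.pushout h₁) (Df.pushout h₂) hzr u hu)
    (T.elementary_triangle _ _) (T.elementary_triangle _ _)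
    (inferInstanceAs (IsIso (γ.map (𝟙 _)))) (inferInstanceAs (IsIso (γ.map _)))

lemma isIso_map_of_doubleMappingCylinder (T : TriangulatedHomotopyCategory 𝒞 H γ)
    (hpt : 𝒞.Pointed) {I X Y Z P SX SYZ IX DM : C} (hI : IsInitial I) {f : X ⟶ Y} {g : X ⟶ Z}
    {g' : Y ⟶ P} {f' : Z ⟶ P} (hf : 𝒞.cof f) (hsq : IsPushout f g g' f')
    {i₁ i₂ : X ⟶ SX} (sqX : IsPushout (hI.to X) (hI.to X) i₁ i₂)
    {iY : Y ⟶ SYZ} {iZ : Z ⟶ SYZ} (sqYZ : IsPushout (hI.to Y) (hI.to Z) iY iZ)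
    {m : SX ⟶ IX} {w : IX ⟶ X} (hm : 𝒞.cof m) (hw : 𝒞.weq w) (hw₁ : i₁ ≫ m ≫ w = 𝟙 X)
    (hw₂ : i₂ ≫ m ≫ w = 𝟙 X) {fg : SX ⟶ SYZ} (h₁ : i₁ ≫ fg = f ≫ iY) (h₂ : i₂ ≫ fg = g ≫ iZ)
    {n : IX ⟶ DM} {j : SYZ ⟶ DM} (sqDM : IsPushout m fg n j)
    {r : DM ⟶ P} (hn : n ≫ r = w ≫ f ≫ g') (hY : iY ≫ j ≫ r = g') (hZ : iZ ≫ j ≫ r = f') :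
    IsIso (γ.map r) := by
  have := T.isLocalization
  -- `A = Y ∪_X IX` along one end of the cylinder; `D` is the pushout of `X ⟶ A` along `g`.
  obtain ⟨A, g₁, f₁, sqA⟩ := 𝒞.pushout_exists f (i₁ ≫ m) hf
  have hi₁ : 𝒞.cof i₁ := 𝒞.cof_pushout _ _ _ _ sqX.flip (𝒞.initial_cof hI _)
  have hi₂ : 𝒞.cof i₂ := 𝒞.cof_pushout _ _ _ _ sqX (𝒞.initial_cof hI _)
  have hwe : 𝒞.weq (i₁ ≫ m) := 𝒞.weq_of_comp_left _ w hw
    (by rw [assoc, hw₁]; exact 𝒞.weq_of_isIso _ inferInstance)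
  have hg₁ : 𝒞.weq g₁ := 𝒞.acyclic_cof_pushout _ _ _ _ sqA.flip (𝒞.cof_comp _ _ hi₁ hm) hwe
  let s := sqA.desc (𝟙 Y) (w ≫ f) (by rw [comp_id, assoc, reassoc_of% hw₁])
  have hs : g₁ ≫ s = 𝟙 Y := sqA.inl_desc _ _ _
  have : IsIso (γ.map g₁) := Localization.inverts γ 𝒞.weq g₁ hg₁
  have : IsIso (γ.map s) := by
    have : IsIso (γ.map g₁ ≫ γ.map s) := by rw [← γ.map_comp, hs, γ.map_id]; infer_instance
    exact IsIso.of_isIso_comp_left (γ.map g₁) (γ.map s)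
  have ha : f ≫ iY ≫ j = (i₁ ≫ m) ≫ n := by rw [assoc, sqDM.w, reassoc_of% h₁]
  refine T.isIso_map_of_isPushout hpt
    (𝒞.cof_comp _ _ (𝒞.cof_comp _ _ hi₂ hm) (𝒞.cof_pushout _ _ _ _ sqA hf)) hf
    (isPushout_comp_of_isPushout_coprod hI sqX sqYZ h₁ h₂ sqDM sqA (sqA.inl_desc _ _ ha)
      (sqA.inr_desc _ _ ha)) hsq (s := s) ?_ ?_ (by rw [assoc, hZ])
  · rw [assoc, assoc, sqA.inr_desc, reassoc_of% hw₂]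
  · refine sqA.hom_ext ?_ ?_
    · rw [sqA.inl_desc_assoc, assoc, hY, reassoc_of% hs]
    · rw [sqA.inr_desc_assoc, hn, sqA.inr_desc_assoc, assoc]

variable [HasBinaryBiproducts H]

lemma isIso_biprod_desc_of_isPushout (T : TriangulatedHomotopyCategory 𝒞 H γ) {I A B S : C}
    (hI : IsInitial I) (hT : IsTerminal I) {inA : A ⟶ S} {inB : B ⟶ S}
    (sq : IsPushout (hI.to A) (hI.to B) inA inB) :
    IsIso (biprod.desc (γ.map inA) (γ.map inB)) := by
  have hr : inB ≫ sq.desc (hT.from A ≫ hI.to B) (𝟙 B) (hI.hom_ext _ _) = 𝟙 B := sq.inr_desc _ _ _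
  have hs : inA ≫ ((QuotientData.ofPoint (𝒞 := 𝒞) hI hT A).pushout sq).q = 𝟙 A :=
    QuotientData.comp_pushout_q _ sq
  have hsr : γ.map inA ≫ γ.map (sq.desc (hT.from A ≫ hI.to B) (𝟙 B) (hI.hom_ext _ _)) = 0 := by
    rw [← γ.map_comp, sq.inl_desc, γ.map_comp, (T.isZero_obj hI hT).eq_of_src (γ.map _) 0,
      comp_zero]
  exact isIso_biprod_desc_of_distTriang
    (T.elementary_triangle (𝒞.cof_pushout _ _ _ _ sq (𝒞.initial_cof hI _))
      ((QuotientData.ofPoint hI hT A).pushout sq))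
    (by rw [← γ.map_comp, hr, γ.map_id]) (by rw [← γ.map_comp, hs, γ.map_id]) hsr

lemma exists_iso_δ_eq_of_cylinder (T : TriangulatedHomotopyCategory 𝒞 H γ) {I X SX IX : C}
    (hI : IsInitial I) (hT : IsTerminal I) {i₁ i₂ : X ⟶ SX}
    (sqX : IsPushout (hI.to X) (hI.to X) i₁ i₂) {m : SX ⟶ IX} {w : IX ⟶ X} (hm : 𝒞.cof m)
    (hw : 𝒞.weq w) (hw₁ : i₁ ≫ m ≫ w = 𝟙 X) (hw₂ : i₂ ≫ m ≫ w = 𝟙 X)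
    (D : QuotientData 𝒞 m) :
    ∃ Θ : γ.obj D.Q ≅ (γ.obj X)⟦(1 : ℤ)⟧, T.δ hm D = Θ.hom ≫
      (biprod.lift (-𝟙 _) (𝟙 _) ≫ biprod.desc (γ.map i₁) (γ.map i₂))⟦(1 : ℤ)⟧' := by
  have := T.isLocalization
  have := T.isIso_biprod_desc_of_isPushout hI hT sqX
  have : IsIso (γ.map w) := Localization.inverts γ 𝒞.weq w hw
  have e₁ : γ.map i₁ ≫ γ.map m ≫ γ.map w = 𝟙 _ := by
    rw [← γ.map_comp, ← γ.map_comp, hw₁, γ.map_id]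
  have e₂ : γ.map i₂ ≫ γ.map m ≫ γ.map w = 𝟙 _ := by
    rw [← γ.map_comp, ← γ.map_comp, hw₂, γ.map_id]
  exact exists_iso_of_distTriang_codiagonal (asIso (biprod.desc (γ.map i₁) (γ.map i₂)))
    (asIso (γ.map w)) (T.elementary_triangle hm D) (by ext <;> simp [e₁, e₂])

lemma exists_distTriang_of_doubleMappingCylinder (T : TriangulatedHomotopyCategory 𝒞 H γ)
    {I X Y Z P SX SYZ IX DM : C} (hI : IsInitial I) (hT : IsTerminal I) {f : X ⟶ Y}
    {g : X ⟶ Z} {g' : Y ⟶ P} {f' : Z ⟶ P} {i₁ i₂ : X ⟶ SX}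
    (sqX : IsPushout (hI.to X) (hI.to X) i₁ i₂)
    {iY : Y ⟶ SYZ} {iZ : Z ⟶ SYZ} (sqYZ : IsPushout (hI.to Y) (hI.to Z) iY iZ)
    {m : SX ⟶ IX} {w : IX ⟶ X} (hm : 𝒞.cof m) (hw : 𝒞.weq w) (hw₁ : i₁ ≫ m ≫ w = 𝟙 X)
    (hw₂ : i₂ ≫ m ≫ w = 𝟙 X) (D : QuotientData 𝒞 m) {fg : SX ⟶ SYZ}
    (h₁ : i₁ ≫ fg = f ≫ iY) (h₂ : i₂ ≫ fg = g ≫ iZ) {n : IX ⟶ DM} {j : SYZ ⟶ DM}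
    (sqDM : IsPushout m fg n j) (r : DM ⟶ P) [IsIso (γ.map r)] (hY : iY ≫ j ≫ r = g')
    (hZ : iZ ≫ j ≫ r = f') :
    ∃ par : γ.obj P ⟶ (γ.obj X)⟦(1 : ℤ)⟧,
      Triangle.mk (biprod.desc (γ.map g') (γ.map f')) par
        ((biprod.lift (-(γ.map f)) (γ.map g))⟦(1 : ℤ)⟧') ∈ distTriang H := by
  have := T.isIso_biprod_desc_of_isPushout hI hT sqYZ
  obtain ⟨Θ, hΘ⟩ := T.exists_iso_δ_eq_of_cylinder hI hT sqX hm hw hw₁ hw₂ D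
  refine exists_distTriang_of_iso
    (T.elementary_triangle (𝒞.cof_pushout _ _ _ _ sqDM hm) (D.pushout sqDM))
    (asIso (biprod.desc (γ.map iY) (γ.map iZ))) (asIso (γ.map r)) Θ ?_ ?_
  · ext
    · rw [asIso_hom, asIso_hom, biprod.inl_desc_assoc, ← γ.map_comp, ← γ.map_comp, hY,
        biprod.inl_desc]
    · rw [asIso_hom, asIso_hom, biprod.inr_desc_assoc, ← γ.map_comp, ← γ.map_comp, hZ,
        biprod.inr_desc]
  · have e₁ : γ.map i₁ ≫ γ.map fg = γ.map f ≫ γ.map iY := by rw [← γ.map_comp, h₁, γ.map_comp]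
    have e₂ : γ.map i₂ ≫ γ.map fg = γ.map g ≫ γ.map iZ := by rw [← γ.map_comp, h₂, γ.map_comp]
    have key : (biprod.lift (-𝟙 _) (𝟙 _) ≫ biprod.desc (γ.map i₁) (γ.map i₂)) ≫ γ.map fg =
        biprod.lift (-(γ.map f)) (γ.map g) ≫ biprod.desc (γ.map iY) (γ.map iZ) := by
      simp [e₁, e₂]
    rw [T.δ_pushout hm sqDM, hΘ, assoc, ← Functor.map_comp, key, Functor.map_comp]
    rfl

end TriangulatedHomotopyCategory

/-- Mayer–Vietoris: a pushout square along a cofibration in a stable cofibration category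
becomes a homotopy cartesian square in the triangulated homotopy category; more precisely
there is an exact triangle `Y ⊕ Z → P → ΣX → Σ(Y ⊕ Z)` whose last morphism is `Σ(-f, g)`. -/
theorem pushout_homotopyCartesian
    (𝒞 : CofibrationCategory C) (hpt : 𝒞.Pointed)
    (H : Type u') [Category.{v'} H] [Preadditive H] [HasZeroObject H] [HasShift H ℤ]
    [∀ n : ℤ, (shiftFunctor H n).Additive] [Pretriangulated H] [HasBinaryBiproducts H]
    (γ : C ⥤ H) (T : TriangulatedHomotopyCategory 𝒞 H γ)
    {X Y Z P : C} (f : X ⟶ Y) (g : X ⟶ Z) (g' : Y ⟶ P) (f' : Z ⟶ P)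
    (hf : 𝒞.cof f) (hsq : IsPushout f g g' f') :
    HomotopyCartesian (γ.map f) (γ.map g) (γ.map g') (γ.map f') ∧
    ∃ par : γ.obj P ⟶ (γ.obj X)⟦(1 : ℤ)⟧,
      Triangle.mk (biprod.desc (γ.map g') (γ.map f')) par
        ((biprod.lift (-(γ.map f)) (γ.map g))⟦(1 : ℤ)⟧') ∈ distTriang H := by
  obtain ⟨I, ⟨hI⟩⟩ := 𝒞.initial_exists
  obtain ⟨hT⟩ := hpt I hI
  obtain ⟨SX, i₁, i₂, sqX⟩ := 𝒞.pushout_exists (hI.to X) (hI.to X) (𝒞.initial_cof hI _)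
  obtain ⟨SYZ, iY, iZ, sqYZ⟩ := 𝒞.pushout_exists (hI.to Y) (hI.to Z) (𝒞.initial_cof hI _)
  obtain ⟨IX, m, w, hm, hw, hmw⟩ := 𝒞.factorization (sqX.desc (𝟙 X) (𝟙 X) (hI.hom_ext _ _))
  have hw₁ : i₁ ≫ m ≫ w = 𝟙 X := by rw [hmw, sqX.inl_desc]
  have hw₂ : i₂ ≫ m ≫ w = 𝟙 X := by rw [hmw, sqX.inr_desc]
  let fg := sqX.desc (f ≫ iY) (g ≫ iZ) (hI.hom_ext _ _)
  have h₁ : i₁ ≫ fg = f ≫ iY := sqX.inl_desc _ _ _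
  have h₂ : i₂ ≫ fg = g ≫ iZ := sqX.inr_desc _ _ _
  obtain ⟨DM, n, j, sqDM⟩ := 𝒞.pushout_exists m fg hm
  let e := sqYZ.desc g' f' (hI.hom_ext _ _)
  have hr : m ≫ w ≫ f ≫ g' = fg ≫ e := sqX.hom_ext
    (by rw [reassoc_of% hw₁, reassoc_of% h₁, sqYZ.inl_desc])
    (by rw [reassoc_of% hw₂, reassoc_of% h₂, sqYZ.inr_desc, hsq.w])
  let r := sqDM.desc (w ≫ f ≫ g') e hr
  have hY : iY ≫ j ≫ r = g' := by rw [sqDM.inr_desc, sqYZ.inl_desc]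
  have hZ : iZ ≫ j ≫ r = f' := by rw [sqDM.inr_desc, sqYZ.inr_desc]
  have : IsIso (γ.map r) := T.isIso_map_of_doubleMappingCylinder hpt hI hf hsq sqX sqYZ hm hw
    hw₁ hw₂ h₁ h₂ sqDM (sqDM.inl_desc _ _ _) hY hZ
  obtain ⟨D⟩ := QuotientData.nonempty_of_cof hpt hm
  obtain ⟨par, hpar⟩ := T.exists_distTriang_of_doubleMappingCylinder hI hT sqX sqYZ hm hw hw₁ hw₂
    D h₁ h₂ sqDM r hY hZ
  exact ⟨.of_distTriang hpar, par, hpar⟩
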